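/- Second-moment error metric decomposition: in an optimal Bayesian inference model with prior rows i.i.d. and bounded support, n^{−2} E‖X Xᵀ − ⟨x xᵀ⟩₀‖_F² = E[(X₁ᵀ X₂)²] − E⟨‖Q‖_F²⟩₀ + O(1/n), where X₁, X₂ ∈ ℝ^K are the first two rows of X, Q = n^{−1} Xᵀ x is the overlap matrix, ⟨−⟩₀ is the posterior expectation and E the expectation over the quenched variables; i.e. the difference between the left-hand side and E[(X₁ᵀX₂)²] − E⟨‖Q‖_F²⟩₀ is bounded in absolute value by C/n for some constant C independent of n. -/

import Mathlib

open MeasureTheory ProbabilityTheory Filter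

noncomputable section

/-- Squared Frobenius norm of a matrix. -/
def frobSq {m k : ℕ} (M : Matrix (Fin m) (Fin k) ℝ) : ℝ := ∑ i, ∑ j, (M i j) ^ 2

open scoped Classical in
/-- The unique positive square root of a positive semidefinite matrix (junk value `0` otherwise). -/
def matSqrt {K : ℕ} (A : Matrix (Fin K) (Fin K) ℝ) : Matrix (Fin K) (Fin K) ℝ :=
  if h : A.PosSemidef then
    (h.1.eigenvectorUnitary : Matrix (Fin K) (Fin K) ℝ) *
      Matrix.diagonal (RCLike.ofReal ∘ Real.sqrt ∘ h.1.eigenvalues : Fin K → ℝ) *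
      (star h.1.eigenvectorUnitary : Matrix (Fin K) (Fin K) ℝ) else 0

/-- Overlap matrix `Q = n⁻¹ Xᵀ x` between the signal `X` and a posterior sample `x`. -/
def overlap {n K : ℕ} (X x : Fin n → Fin K → ℝ) : Matrix (Fin K) (Fin K) ℝ :=
  (n : ℝ)⁻¹ • ((Matrix.of X).transpose * Matrix.of x)

/-- The perturbing Hamiltonian `H_λ(x, Y) = ½‖x λ^{1/2}‖_F² − Tr(Yᵀ x λ^{1/2})`. -/
def pertH {n K : ℕ} (lam : Matrix (Fin K) (Fin K) ℝ) (x Y : Fin n → Fin K → ℝ) : ℝ :=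
  (1 / 2 : ℝ) * frobSq (Matrix.of x * matSqrt lam)
    - ((Matrix.of Y).transpose * (Matrix.of x * matSqrt lam)).trace

open scoped Classical in
/-- Elementary symmetric direction matrix corresponding to the independent entry
`λ_{ll'} = λ_{l'l}` of a symmetric matrix `λ`. -/
def symBasis {K : ℕ} (l l' : Fin K) : Matrix (Fin K) (Fin K) ℝ :=
  fun a b => if (a = l ∧ b = l') ∨ (a = l' ∧ b = l) then 1 else 0

/-- `L = n⁻¹ ∇_λ H_λ(x,Y)`: the gradient of the perturbing Hamiltonian with respect to the
`K(K+1)/2` independent entries of the symmetric matrix `λ`. -/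
def Lmat {n K : ℕ} (lam : Matrix (Fin K) (Fin K) ℝ) (x Y : Fin n → Fin K → ℝ) :
    Matrix (Fin K) (Fin K) ℝ :=
  fun l l' => (n : ℝ)⁻¹ * deriv (fun t : ℝ => pertH (lam + t • symBasis l l') x Y) 0

/-- The set `D_K` of symmetric SNR matrices with off-diagonal entries in `(1,2)` and diagonal
entries in `(2K, 2K+1)`. -/
def DK (K : ℕ) : Set (Matrix (Fin K) (Fin K) ℝ) :=
  {A | (∀ k l, A k l = A l k) ∧ (∀ k l, k ≠ l → A k l ∈ Set.Ioo (1 : ℝ) 2) ∧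
    (∀ k, A k k ∈ Set.Ioo (2 * K : ℝ) (2 * K + 1))}

/-- `D_{n,K} = s_n · D_K`. -/
def DnK (s : ℝ) (K : ℕ) : Set (Matrix (Fin K) (Fin K) ℝ) := (fun A => s • A) '' DK K

/-- Index set for the `K(K+1)/2` independent entries of a symmetric `K×K` matrix. -/
abbrev SymIdx (K : ℕ) := {q : Fin K × Fin K // q.1 ≤ q.2}

open scoped Classical in
/-- The symmetric matrix built from its independent entries. -/
def symOfParam {K : ℕ} (p : SymIdx K → ℝ) : Matrix (Fin K) (Fin K) ℝ :=
  fun k l => if h : k ≤ l then p ⟨(k, l), h⟩ else p ⟨(l, k), le_of_not_ge h⟩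

/-- The set of independent entries describing `D_K`: the uniform average over it realizes the
average `E_λ` over `D_{n,K}` (after the rescaling `λ = s_n λ̃`). -/
def paramSet (K : ℕ) : Set (SymIdx K → ℝ) :=
  {p | ∀ q : SymIdx K,
    (q.1.1 = q.1.2 → p q ∈ Set.Ioo (2 * K : ℝ) (2 * K + 1)) ∧
    (q.1.1 ≠ q.1.2 → p q ∈ Set.Ioo (1 : ℝ) 2)}

/-- Entrywise expectation of a matrix-valued function. -/
def mExp {α : Type*} [MeasurableSpace α] (μ : Measure α) {k l : ℕ}
    (f : α → Matrix (Fin k) (Fin l) ℝ) : Matrix (Fin k) (Fin l) ℝ :=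
  fun a b => ∫ x, f x a b ∂μ

/-- The side information `Y = X λ^{1/2} + Z` of the vectorial Gaussian channel. -/
def sideInfo {n K : ℕ} (lam : Matrix (Fin K) (Fin K) ℝ) (x z : Fin n → Fin K → ℝ) :
    Fin n → Fin K → ℝ :=
  fun i k => (Matrix.of x * matSqrt lam) i k + z i k

/-- The posterior of the perturbed model: the (regular version of the) conditional law of the
signal `X` given the data `(θ, Ỹ, Y)` where `Y = X λ^{1/2} + Z`. -/
def posterior {n K : ℕ} {Ω Θ' Y' : Type} [MeasurableSpace Ω] [MeasurableSpace Θ']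
    [MeasurableSpace Y'] (P : Measure Ω) [IsFiniteMeasure P]
    (X : Ω → (Fin n → Fin K → ℝ)) (θ : Ω → Θ') (Yt : Ω → Y') (Z : Ω → (Fin n → Fin K → ℝ))
    (lam : Matrix (Fin K) (Fin K) ℝ) (ω : Ω) : Measure (Fin n → Fin K → ℝ) :=
  (condDistrib X (fun ω' => (θ ω', Yt ω', sideInfo lam (X ω') (Z ω'))) P)
    (θ ω, Yt ω, sideInfo lam (X ω) (Z ω))


/-- The posterior mean `⟨x⟩` of the signal under a posterior measure. -/
def postMean {n K : ℕ} (μ : Measure (Fin n → Fin K → ℝ)) : Fin n → Fin K → ℝ :=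
  fun i k => ∫ x, x i k ∂μ

/-! Write `M_ij = X_iᵀ X_j` and `⟨M_ij⟩` for its posterior mean. The posterior mean is the
`L²`-projection onto functions of the data, so `E (M_ij - ⟨M_ij⟩)² = E M_ij² - E ⟨M_ij⟩²`, and
by the tower property `E ⟨‖Q‖_F²⟩ = n⁻² Σ_ij E [M_ij ⟨M_ij⟩] = n⁻² Σ_ij E ⟨M_ij⟩²`; the posterior
terms therefore cancel exactly. Since the rows are i.i.d., every off-diagonal `E M_ij²` equals
`E (X₁ᵀ X₂)²`, and what remains is the diagonal `n⁻² Σ_i E M_ii²` and the `n⁻¹ E (X₁ᵀ X₂)²` missed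
by the off-diagonal count `n² - n`, both bounded by `(K S²)² / n`. Integrability is never an
issue: the signal is bounded, and almost surely so is every posterior sample. -/

section Pythagoras

variable {Ω : Type*} [MeasurableSpace Ω] {μ : Measure Ω}

lemma integral_sub_sq_of_integral_mul_eq {a b : Ω → ℝ} (ha : MemLp a 2 μ) (hb : MemLp b 2 μ)
    (h : ∫ ω, a ω * b ω ∂μ = ∫ ω, b ω ^ 2 ∂μ) :
    ∫ ω, (a ω - b ω) ^ 2 ∂μ = ∫ ω, a ω ^ 2 ∂μ - ∫ ω, b ω ^ 2 ∂μ := by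
  have hab : Integrable (fun ω => 2 * (a ω * b ω)) μ := (ha.integrable_mul hb).const_mul 2
  have hsub : Integrable (fun ω => a ω ^ 2 - 2 * (a ω * b ω)) μ := ha.integrable_sq.sub hab
  calc ∫ ω, (a ω - b ω) ^ 2 ∂μ = ∫ ω, (a ω ^ 2 - 2 * (a ω * b ω)) + b ω ^ 2 ∂μ := by
        congr 1 with ω; ring
    _ = ∫ ω, a ω ^ 2 ∂μ - 2 * ∫ ω, a ω * b ω ∂μ + ∫ ω, b ω ^ 2 ∂μ := by
        rw [integral_add hsub hb.integrable_sq,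
          integral_sub ha.integrable_sq hab, integral_const_mul]
    _ = ∫ ω, a ω ^ 2 ∂μ - ∫ ω, b ω ^ 2 ∂μ := by rw [h]; ring

end Pythagoras

section CondDistrib

variable {Ω α E : Type*} [MeasurableSpace Ω] [MeasurableSpace α] [MeasurableSpace E]
  {P : Measure Ω} [IsProbabilityMeasure P] {T : Ω → α} {Y : Ω → E} {g : E → ℝ} {B : Set E} {c : ℝ}

lemma memLp_comp_of_forall_mem (hY : Measurable Y) (hg : Measurable g) (hYB : ∀ ω, Y ω ∈ B)
    (hgB : ∀ y ∈ B, |g y| ≤ c) (p : ENNReal) : MemLp (fun ω => g (Y ω)) p P :=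
  MemLp.of_bound (hg.comp hY).aestronglyMeasurable c (ae_of_all _ fun ω => hgB _ (hYB ω))

variable [StandardBorelSpace E] [Nonempty E]

lemma integral_eq_integral_integral_condDistrib (hT : Measurable T) (hY : Measurable Y)
    {f : α × E → ℝ} (hf : StronglyMeasurable f) (hfi : Integrable (fun ω => f (T ω, Y ω)) P) :
    ∫ ω, f (T ω, Y ω) ∂P = ∫ ω, ∫ y, f (T ω, y) ∂condDistrib Y T P (T ω) ∂P := by
  rw [← integral_condExp hT.comap_le,
    integral_congr_ae (condExp_prod_ae_eq_integral_condDistrib hT hY.aemeasurable hf hfi)]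

lemma ae_ae_condDistrib_mem (hT : Measurable T) (hY : Measurable Y) (hB : MeasurableSet B)
    (hYB : ∀ ω, Y ω ∈ B) :
    ∀ᵐ ω ∂P, ∀ᵐ y ∂condDistrib Y T P (T ω), y ∈ B := by
  have hlaw : ∀ᵐ q ∂(P.map T ⊗ₘ condDistrib Y T P), q.2 ∈ B := by
    rw [compProd_map_condDistrib hY.aemeasurable,
      ae_map_iff (hT.prodMk hY).aemeasurable (measurable_snd hB)]
    exact ae_of_all _ hYB
  exact ae_of_ae_map hT.aemeasurable (Measure.ae_ae_of_ae_compProd hlaw)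

lemma ae_abs_integral_condDistrib_le (hT : Measurable T) (hY : Measurable Y)
    (hB : MeasurableSet B) (hYB : ∀ ω, Y ω ∈ B) (hgB : ∀ y ∈ B, |g y| ≤ c) :
    ∀ᵐ ω ∂P, |∫ y, g y ∂condDistrib Y T P (T ω)| ≤ c := by
  filter_upwards [ae_ae_condDistrib_mem hT hY hB hYB] with ω hω
  simpa using norm_integral_le_of_norm_le_const
    (hω.mono fun y hy => (Real.norm_eq_abs _).trans_le (hgB y hy))

lemma memLp_integral_condDistrib (hT : Measurable T) (hY : Measurable Y) (hg : Measurable g)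
    (hB : MeasurableSet B) (hYB : ∀ ω, Y ω ∈ B) (hgB : ∀ y ∈ B, |g y| ≤ c) (p : ENNReal) :
    MemLp (fun ω => ∫ y, g y ∂condDistrib Y T P (T ω)) p P :=
  MemLp.of_bound
    ((hg.comp measurable_snd).stronglyMeasurable.integral_condDistrib.comp_measurable hT
      |>.aestronglyMeasurable) c (ae_abs_integral_condDistrib_le hT hY hB hYB hgB)

lemma integral_mul_integral_condDistrib (hT : Measurable T) (hY : Measurable Y)
    (hg : Measurable g) (hB : MeasurableSet B) (hYB : ∀ ω, Y ω ∈ B) (hgB : ∀ y ∈ B, |g y| ≤ c) :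
    ∫ ω, g (Y ω) * ∫ y, g y ∂condDistrib Y T P (T ω) ∂P
      = ∫ ω, (∫ y, g y ∂condDistrib Y T P (T ω)) ^ 2 ∂P := by
  set G : α → ℝ := fun t => ∫ y, g y ∂condDistrib Y T P t
  have hG : StronglyMeasurable G :=
    (hg.comp measurable_snd).stronglyMeasurable.integral_condDistrib
  have hi : Integrable (fun ω => g (Y ω) * G (T ω)) P :=
    (memLp_comp_of_forall_mem hY hg hYB hgB 2).integrable_mul
      (memLp_integral_condDistrib hT hY hg hB hYB hgB 2)
  rw [integral_eq_integral_integral_condDistrib hT hY (f := fun q => g q.2 * G q.1)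
    ((hg.comp measurable_snd).stronglyMeasurable.mul (hG.comp_measurable measurable_fst)) hi]
  simp_rw [integral_mul_const, sq, G]

lemma integral_sub_integral_condDistrib_sq (hT : Measurable T) (hY : Measurable Y)
    (hg : Measurable g) (hB : MeasurableSet B) (hYB : ∀ ω, Y ω ∈ B) (hgB : ∀ y ∈ B, |g y| ≤ c) :
    ∫ ω, (g (Y ω) - ∫ y, g y ∂condDistrib Y T P (T ω)) ^ 2 ∂P
      = ∫ ω, g (Y ω) ^ 2 ∂P - ∫ ω, (∫ y, g y ∂condDistrib Y T P (T ω)) ^ 2 ∂P :=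
  integral_sub_sq_of_integral_mul_eq (memLp_comp_of_forall_mem hY hg hYB hgB 2)
    (memLp_integral_condDistrib hT hY hg hB hYB hgB 2)
    (integral_mul_integral_condDistrib hT hY hg hB hYB hgB)

end CondDistrib

lemma Equiv.Perm.exists_apply_eq_and_apply_eq {α : Type*} [DecidableEq α] {a b i j : α}
    (hab : a ≠ b) (hij : i ≠ j) : ∃ σ : Equiv.Perm α, σ a = i ∧ σ b = j := by
  have hb : Equiv.swap a i b ≠ i := by
    rw [Ne, Equiv.swap_apply_eq_iff, Equiv.swap_apply_right]
    exact hab.symm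
  refine ⟨(Equiv.swap a i).trans (Equiv.swap (Equiv.swap a i b) j), ?_, by simp⟩
  simp [Equiv.swap_apply_of_ne_of_ne hb.symm hij]

lemma integral_pi_apply_pair_eq {ι β : Type*} [Fintype ι] [MeasurableSpace β] (μ : Measure β)
    [SigmaFinite μ] (F : β → β → ℝ) {a b i j : ι} (hab : a ≠ b) (hij : i ≠ j) :
    ∫ v, F (v a) (v b) ∂Measure.pi (fun _ => μ)
      = ∫ v, F (v i) (v j) ∂Measure.pi (fun _ => μ) := by
  classical
  obtain ⟨σ, rfl, rfl⟩ := Equiv.Perm.exists_apply_eq_and_apply_eq hab hij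
  rw [← (measurePreserving_piCongrLeft (fun _ => μ) σ).integral_comp'
    (g := fun v => F (v (σ a)) (v (σ b)))]
  simp only [MeasurableEquiv.piCongrLeft_apply_apply]

lemma integral_apply_pair_eq_of_map_eq_pi {Ω ι β : Type*} [MeasurableSpace Ω] [Fintype ι]
    [MeasurableSpace β] {P : Measure Ω} {X : Ω → ι → β} (hX : Measurable X) {μ : Measure β}
    [SigmaFinite μ] (hlaw : P.map X = Measure.pi fun _ => μ) {F : β → β → ℝ}
    (hF : Measurable (Function.uncurry F)) {a b i j : ι} (hab : a ≠ b) (hij : i ≠ j) :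
    ∫ ω, F (X ω a) (X ω b) ∂P = ∫ ω, F (X ω i) (X ω j) ∂P := by
  have hFpair : ∀ a b : ι, Measurable fun v : ι → β => F (v a) (v b) := fun a b =>
    hF.comp (f := fun v : ι → β => (v a, v b))
      ((measurable_pi_apply a).prodMk (measurable_pi_apply b))
  rw [← integral_map hX.aemeasurable (hFpair a b).aestronglyMeasurable,
    ← integral_map hX.aemeasurable (hFpair i j).aestronglyMeasurable, hlaw]
  exact integral_pi_apply_pair_eq μ F hab hij

lemma sum_sum_eq_sum_diag_add_of_offDiag {ι R : Type*} [Fintype ι] [DecidableEq ι] [CommRing R]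
    {A : ι → ι → R} {v : R} (h : ∀ i j, i ≠ j → A i j = v) :
    ∑ i, ∑ j, A i j = ∑ i, A i i + ((Fintype.card ι : R) ^ 2 - Fintype.card ι) * v := by
  have hA : ∀ i j, A i j = v + if i = j then A i i - v else 0 := by
    intro i j
    split_ifs with hij
    · rw [hij]; ring
    · rw [h i j hij, add_zero]
  rw [Finset.sum_congr rfl fun i _ => Finset.sum_congr rfl fun j _ => hA i j]
  simp [Finset.sum_add_distrib, Finset.sum_sub_distrib]
  ring

lemma abs_sum_mul_le_card_mul_sq {ι : Type*} [Fintype ι] {u w : ι → ℝ} {S : ℝ}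
    (hu : ∀ k, |u k| ≤ S) (hw : ∀ k, |w k| ≤ S) : |∑ k, u k * w k| ≤ Fintype.card ι * S ^ 2 := by
  calc |∑ k, u k * w k| ≤ ∑ k, |u k * w k| := Finset.abs_sum_le_sum_abs _ _
    _ ≤ ∑ _k : ι, S ^ 2 := Finset.sum_le_sum fun k _ => by
        rw [abs_mul, sq]
        exact mul_le_mul (hu k) (hw k) (abs_nonneg _) ((abs_nonneg _).trans (hu k))
    _ = Fintype.card ι * S ^ 2 := by simp

lemma frobSq_overlap {n K : ℕ} (X x : Fin n → Fin K → ℝ) :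
    frobSq (overlap X x)
      = ((n : ℝ) ^ 2)⁻¹ * ∑ i, ∑ j, (∑ k, X i k * X j k) * ∑ k, x i k * x j k := by
  simp only [frobSq, overlap, Matrix.smul_apply, Matrix.mul_apply, Matrix.transpose_apply,
    Matrix.of_apply, smul_eq_mul, mul_pow, inv_pow, ← Finset.mul_sum]
  congr 1
  simp only [sq, Finset.sum_mul_sum,
    Finset.sum_comm (s := (Finset.univ : Finset (Fin K))) (t := (Finset.univ : Finset (Fin n)))]
  refine Finset.sum_congr rfl fun i _ => Finset.sum_congr rfl fun j _ =>
    Finset.sum_congr rfl fun k _ => Finset.sum_congr rfl fun l _ => by ring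

lemma measurableSet_forall_abs_le {ι κ : Type*} [Countable ι] [Countable κ] (S : ℝ) :
    MeasurableSet {x : ι → κ → ℝ | ∀ i k, |x i k| ≤ S} := by
  simp only [Set.ofPred_forall]
  exact .iInter fun i => .iInter fun k => measurableSet_le (by fun_prop) measurable_const

section Signal

variable {n K : ℕ} {S : ℝ} {Ω α : Type*} [MeasurableSpace Ω] [MeasurableSpace α]
  {P : Measure Ω} [IsProbabilityMeasure P] {X : Ω → Fin n → Fin K → ℝ} {T : Ω → α}

lemma abs_sum_mul_rows_le {x : Fin n → Fin K → ℝ} (hx : ∀ i k, |x i k| ≤ S) (i j : Fin n) :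
    |∑ k, x i k * x j k| ≤ K * S ^ 2 := by
  simpa using abs_sum_mul_le_card_mul_sq (hx i) (hx j)

lemma integral_frobSq_gram_sub_posterior (hX : Measurable X) (hT : Measurable T)
    (hXS : ∀ ω i k, |X ω i k| ≤ S) :
    ∫ ω, frobSq (Matrix.of fun i j : Fin n => (∑ k, X ω i k * X ω j k)
        - ∫ x, (∑ k, x i k * x j k) ∂condDistrib X T P (T ω)) ∂P
      = ∑ i, ∑ j, ∫ ω, (∑ k, X ω i k * X ω j k) ^ 2 ∂P
        - ∑ i, ∑ j, ∫ ω, (∫ x, (∑ k, x i k * x j k) ∂condDistrib X T P (T ω)) ^ 2 ∂P := by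
  set B := {x : Fin n → Fin K → ℝ | ∀ i k, |x i k| ≤ S}
  have hB : MeasurableSet B := measurableSet_forall_abs_le S
  have hXB : ∀ ω, X ω ∈ B := hXS
  have hg : ∀ i j : Fin n, Measurable fun x : Fin n → Fin K → ℝ => ∑ k, x i k * x j k := by
    intro i j; fun_prop
  have hgB : ∀ i j, ∀ x ∈ B, |∑ k, x i k * x j k| ≤ K * S ^ 2 := fun i j _ hx =>
    abs_sum_mul_rows_le hx i j
  have hint : ∀ i j, Integrable (fun ω => ((∑ k, X ω i k * X ω j k)
      - ∫ x, (∑ k, x i k * x j k) ∂condDistrib X T P (T ω)) ^ 2) P := fun i j =>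
    ((memLp_comp_of_forall_mem hX (hg i j) hXB (hgB i j) 2).sub
      (memLp_integral_condDistrib hT hX (hg i j) hB hXB (hgB i j) 2)).integrable_sq
  simp only [frobSq, Matrix.of_apply]
  rw [integral_finsetSum _ fun i _ => integrable_finsetSum _ fun j _ => hint i j,
    ← Finset.sum_sub_distrib]
  refine Finset.sum_congr rfl fun i _ => ?_
  rw [integral_finsetSum _ fun j _ => hint i j, ← Finset.sum_sub_distrib]
  exact Finset.sum_congr rfl fun j _ =>
    integral_sub_integral_condDistrib_sq hT hX (hg i j) hB hXB (hgB i j)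

lemma integral_integral_frobSq_overlap (hX : Measurable X) (hT : Measurable T)
    (hXS : ∀ ω i k, |X ω i k| ≤ S) :
    ∫ ω, ∫ x, frobSq (overlap (X ω) x) ∂condDistrib X T P (T ω) ∂P
      = ((n : ℝ) ^ 2)⁻¹ *
        ∑ i, ∑ j, ∫ ω, (∫ x, (∑ k, x i k * x j k) ∂condDistrib X T P (T ω)) ^ 2 ∂P := by
  set B := {x : Fin n → Fin K → ℝ | ∀ i k, |x i k| ≤ S}
  have hB : MeasurableSet B := measurableSet_forall_abs_le S
  have hXB : ∀ ω, X ω ∈ B := hXS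
  have hg : ∀ i j : Fin n, Measurable fun x : Fin n → Fin K → ℝ => ∑ k, x i k * x j k := by
    intro i j; fun_prop
  have hgB : ∀ i j, ∀ x ∈ B, |∑ k, x i k * x j k| ≤ K * S ^ 2 := fun i j _ hx =>
    abs_sum_mul_rows_le hx i j
  have hinner : ∀ᵐ ω ∂P, ∫ x, frobSq (overlap (X ω) x) ∂condDistrib X T P (T ω)
      = ((n : ℝ) ^ 2)⁻¹ * ∑ i, ∑ j, (∑ k, X ω i k * X ω j k)
          * ∫ x, (∑ k, x i k * x j k) ∂condDistrib X T P (T ω) := by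
    filter_upwards [ae_ae_condDistrib_mem hT hX hB hXB] with ω hω
    have hint : ∀ i j, Integrable (fun x => (∑ k, X ω i k * X ω j k) * ∑ k, x i k * x j k)
        (condDistrib X T P (T ω)) := fun i j =>
      (Integrable.of_bound (hg i j).aestronglyMeasurable _
        (hω.mono fun x hx => (Real.norm_eq_abs _).trans_le (hgB i j x hx))).const_mul _
    simp_rw [frobSq_overlap]
    rw [integral_const_mul, integral_finsetSum _ fun i _ => integrable_finsetSum _ fun j _ =>
      hint i j]
    congr 1
    refine Finset.sum_congr rfl fun i _ => ?_
    rw [integral_finsetSum _ fun j _ => hint i j]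
    exact Finset.sum_congr rfl fun j _ => integral_const_mul _ _
  have hint : ∀ i j, Integrable (fun ω => (∑ k, X ω i k * X ω j k)
      * ∫ x, (∑ k, x i k * x j k) ∂condDistrib X T P (T ω)) P := fun i j =>
    (memLp_comp_of_forall_mem hX (hg i j) hXB (hgB i j) 2).integrable_mul
      (memLp_integral_condDistrib hT hX (hg i j) hB hXB (hgB i j) 2)
  rw [integral_congr_ae hinner, integral_const_mul,
    integral_finsetSum _ fun i _ => integrable_finsetSum _ fun j _ => hint i j]
  congr 1
  refine Finset.sum_congr rfl fun i _ => ?_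
  rw [integral_finsetSum _ fun j _ => hint i j]
  exact Finset.sum_congr rfl fun j _ =>
    integral_mul_integral_condDistrib hT hX (hg i j) hB hXB (hgB i j)

end Signal

lemma abs_inv_sq_mul_sub_le {N s v G c : ℝ} (hN : 0 < N) (hs : |s| ≤ N * c) (hv : |v| ≤ c) :
    |(N ^ 2)⁻¹ * (s + (N ^ 2 - N) * v - G) - (v - (N ^ 2)⁻¹ * G)| ≤ 2 * c / N := by
  have hsimp :
      (N ^ 2)⁻¹ * (s + (N ^ 2 - N) * v - G) - (v - (N ^ 2)⁻¹ * G) = s / N ^ 2 - v / N := by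
    field_simp
    ring
  calc |(N ^ 2)⁻¹ * (s + (N ^ 2 - N) * v - G) - (v - (N ^ 2)⁻¹ * G)|
      ≤ |s| / N ^ 2 + |v| / N := by
        rw [hsimp]
        refine (abs_sub _ _).trans_eq ?_
        rw [abs_div, abs_div, abs_of_pos (by positivity : 0 < N ^ 2), abs_of_pos hN]
    _ ≤ N * c / N ^ 2 + c / N := by gcongr
    _ = 2 * c / N := by field_simp; ring

/-- **Second-moment error metric decomposition**: in an optimal Bayesian inference model with
i.i.d. prior rows of bounded support,
`n⁻² E‖XXᵀ − ⟨xxᵀ⟩₀‖_F² = E[(X₁ᵀX₂)²] − E⟨‖Q‖_F²⟩₀ + O(1/n)`. -/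
theorem second_moment_metric_decomposition
    {K : ℕ} {S : ℝ}
    {Ω Θ' Y' : Type} [MeasurableSpace Ω] [MeasurableSpace Θ'] [MeasurableSpace Y']
    (P : Measure Ω) [IsProbabilityMeasure P]
    (X : ∀ n : ℕ, Ω → (Fin n → Fin K → ℝ))
    (θ : ℕ → Ω → Θ') (Yt : ℕ → Ω → Y')
    (hX : ∀ n, Measurable (X n)) (hXb : ∀ n ω i k, |X n ω i k| ≤ S)
    (hθ : ∀ n, Measurable (θ n)) (hYt : ∀ n, Measurable (Yt n))
    -- the rows of the signal are i.i.d. with law `p0` supported in `[-S,S]^K`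
    (p0 : Measure (Fin K → ℝ)) (hp0 : IsProbabilityMeasure p0)
    (hrows : ∀ n, P.map (fun ω => fun i : Fin n => fun k => X n ω i k)
      = Measure.pi fun _ : Fin n => p0) :
    ∃ C > 0, ∀ (n : ℕ) (hn2 : 2 ≤ n),
      |((n : ℝ) ^ 2)⁻¹ * (∫ ω, frobSq (Matrix.of (fun i j : Fin n =>
            (∑ k, X n ω i k * X n ω j k)
              - ∫ x, (∑ k, x i k * x j k)
                  ∂(condDistrib (X n) (fun ω' => (θ n ω', Yt n ω')) P (θ n ω, Yt n ω)))) ∂P)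
        - ((∫ ω, (∑ k, X n ω ⟨0, by omega⟩ k * X n ω ⟨1, by omega⟩ k) ^ 2 ∂P)
          - ∫ ω, ∫ x, frobSq (overlap (X n ω) x)
              ∂(condDistrib (X n) (fun ω' => (θ n ω', Yt n ω')) P (θ n ω, Yt n ω)) ∂P)|
      ≤ C / n := by
  refine ⟨2 * (K * S ^ 2) ^ 2 + 1, by positivity, fun n hn2 => ?_⟩
  have hT : Measurable fun ω => (θ n ω, Yt n ω) := (hθ n).prodMk (hYt n)
  have hm_le : ∀ i j : Fin n, |∫ ω, (∑ k, X n ω i k * X n ω j k) ^ 2 ∂P| ≤ (K * S ^ 2) ^ 2 :=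
    fun i j => by
      have h := norm_integral_le_of_norm_le_const (μ := P) (C := (K * S ^ 2) ^ 2)
        (ae_of_all _ fun ω => by
          rw [Real.norm_eq_abs, abs_pow]
          exact pow_le_pow_left₀ (abs_nonneg _) (abs_sum_mul_rows_le (hXb n ω) i j) 2)
      rwa [probReal_univ, mul_one, Real.norm_eq_abs] at h
  have hm_offDiag : ∀ i j : Fin n, i ≠ j → ∫ ω, (∑ k, X n ω i k * X n ω j k) ^ 2 ∂P
      = ∫ ω, (∑ k, X n ω ⟨0, by omega⟩ k * X n ω ⟨1, by omega⟩ k) ^ 2 ∂P :=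
    fun i j hij => integral_apply_pair_eq_of_map_eq_pi (hX n) (hrows n)
      (F := fun u w => (∑ k, u k * w k) ^ 2) (by fun_prop) hij
      (by simp [Fin.ext_iff])
  rw [integral_frobSq_gram_sub_posterior (hX n) hT (hXb n),
    integral_integral_frobSq_overlap (hX n) hT (hXb n),
    sum_sum_eq_sum_diag_add_of_offDiag hm_offDiag, Fintype.card_fin]
  have hdiag : |∑ i : Fin n, ∫ ω, (∑ k, X n ω i k * X n ω i k) ^ 2 ∂P| ≤ n * (K * S ^ 2) ^ 2 :=
    (Finset.abs_sum_le_sum_abs _ _).trans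
      ((Finset.sum_le_sum fun i _ => hm_le i i).trans_eq (by simp))
  refine (abs_inv_sq_mul_sub_le (by positivity) hdiag (hm_le _ _)).trans ?_
  gcongr
  linarith

end
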